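/- arXiv:2509.04234 — 2 statements merged into one kernel-verified Lean document; each statement's English description precedes it below -/
import Mathlib

section
/- Let l ≥ 2, let m, n ≥ 2l − 3, set N = m + n − l, and for 1 ≤ d ≤ l−1 let R(l,d) be the number of Brauer representation triples γ for the pair (m, n−d) with N < ht(γ) ≤ N + d. Then R(l,d) = Z_univ(l−d) − Z_univ(l−2d) for 1 ≤ d ≤ ⌊l/2⌋, and R(l,d) = Z_univ(l−d) for ⌈l/2⌉ ≤ d ≤ l−1. -/
/-- A Brauer representation triple for the pair `(m, n)`: a natural number
`k ≤ min m n`, a partition `γ₊` of `m - k` and a partition `γ₋` of `n - k`. -/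
structure BRT (m n : ℕ) where
  k : ℕ
  k_le : k ≤ min m n
  gp : Nat.Partition (m - k)
  gm : Nat.Partition (n - k)

namespace BRT

/-- The height of a Brauer representation triple: the total number of parts of the
two partitions (the sum of the first-column lengths of the Young diagrams). -/
def ht {m n : ℕ} (γ : BRT m n) : ℕ :=
  Multiset.card γ.gp.parts + Multiset.card γ.gm.parts

end BRT

/-- `AddBox lam mu` : the multiset of parts `mu` is obtained from the multiset of parts
`lam` by adding one box to the Young diagram (either as a new part equal to `1`, or by
increasing one existing part by `1`). -/
def AddBox (lam mu : Multiset ℕ) : Prop :=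
  mu = 1 ::ₘ lam ∨ ∃ a ∈ lam, mu = (a + 1) ::ₘ lam.erase a

/-- `γ'` (a triple at depth `d+1`) is a parent of `γ` (a triple at depth `d`):
either (a) `k' = k`, `γ₊' = γ₊` and `γ₋` is obtained from `γ₋'` by adding one box, or
(b) `k' = k - 1`, `γ₋' = γ₋` and `γ₊'` is obtained from `γ₊` by adding one box. -/
def IsParent {m n₁ n₂ : ℕ} (γ : BRT m n₁) (γ' : BRT m n₂) : Prop :=
  (γ'.k = γ.k ∧ γ'.gp.parts = γ.gp.parts ∧ AddBox γ'.gm.parts γ.gm.parts)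
  ∨ (γ'.k = γ.k - 1 ∧ γ'.gm.parts = γ.gm.parts ∧ AddBox γ.gp.parts γ'.gp.parts)

/-- `IsAncestor m n d d' γ γ'` : the triple `γ'` at depth `d'` for the pair `(m,n)` is an
ancestor of the triple `γ` at depth `d`, i.e. `γ'` is reachable from `γ` by iterating
the parent relation `d' - d` times (one step for each unit increase of depth). -/
inductive IsAncestor (m n : ℕ) : ∀ (d d' : ℕ), BRT m (n - d) → BRT m (n - d') → Prop
  | step {d : ℕ} (γ : BRT m (n - d)) (γ' : BRT m (n - (d + 1))) :
      IsParent γ γ' → IsAncestor m n d (d + 1) γ γ'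
  | tail {d d' : ℕ} {γ : BRT m (n - d)} {γ' : BRT m (n - d')} (γ'' : BRT m (n - (d' + 1))) :
      IsAncestor m n d d' γ γ' → IsParent γ' γ'' → IsAncestor m n d (d' + 1) γ γ''

/-- `Zuniv s` : the number of quadruples `(Δ, k, λ₁, λ₂)` with `Δ ≥ 1`, `k ≥ 0` natural
numbers and `λ₁, λ₂` partitions (of arbitrary natural numbers) such that
`Δ + 2k + |λ₁| + |λ₂| = s`. -/
noncomputable def Zuniv (s : ℕ) : ℕ :=
  Nat.card {q : (ℕ × ℕ) × (Σ a : ℕ, Nat.Partition a) × (Σ a : ℕ, Nat.Partition a) //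
    1 ≤ q.1.1 ∧ q.1.1 + 2 * q.1.2 + q.2.1.1 + q.2.2.1 = s}

/-- `p a` : the number of partitions of `a` (with `p 0 = 1`). -/
def p (a : ℕ) : ℕ := Fintype.card (Nat.Partition a)

/-!
Removing the first column of each of `γ₊` and `γ₋` turns a triple `γ = (k, γ₊, γ₋)` for `(m, n')`
into `(k, λ₁, λ₂)` with `|λ₁| = m - k - ℓ(γ₊)` and `|λ₂| = n' - k - ℓ(γ₋)`, so that
`ht γ = m + n' - (2k + |λ₁| + |λ₂|)`. Conversely `(k, λ₁, λ₂)` comes from a triple as soon as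
the added columns are at least as long as the first columns of `λ₁, λ₂`, which is automatic
when `m, n ≥ 2l - 3` and the weight `2k + |λ₁| + |λ₂|` is below `l - d`. Since `Δ` is determined
by the rest, `Z_univ s` counts the `(k, λ₁, λ₂)` of weight `< s`, and the height window
`N < ht ≤ N + d` is exactly the weight window `l - 2d ≤ 2k + |λ₁| + |λ₂| < l - d`.
-/

def addFirstColumn (s : Multiset ℕ) (j : ℕ) : Multiset ℕ :=
  s.map (· + 1) + Multiset.replicate j 1

def removeFirstColumn (s : Multiset ℕ) : Multiset ℕ :=
  (s.filter (1 < ·)).map (· - 1)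

lemma sum_addFirstColumn (s : Multiset ℕ) (j : ℕ) :
    (addFirstColumn s j).sum = s.sum + s.card + j := by
  simp [addFirstColumn, Multiset.sum_map_add, add_assoc]

lemma pos_of_mem_addFirstColumn {s : Multiset ℕ} {j i : ℕ} (h : i ∈ addFirstColumn s j) :
    0 < i := by
  simp only [addFirstColumn, Multiset.mem_add, Multiset.mem_map, Multiset.mem_replicate] at h
  omega

lemma pos_of_mem_removeFirstColumn {s : Multiset ℕ} {i : ℕ} (h : i ∈ removeFirstColumn s) :
    0 < i := by
  simp only [removeFirstColumn, Multiset.mem_map, Multiset.mem_filter] at h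
  omega

lemma card_removeFirstColumn_le (s : Multiset ℕ) : (removeFirstColumn s).card ≤ s.card := by
  simpa [removeFirstColumn] using Multiset.card_le_card (Multiset.filter_le _ s)

lemma removeFirstColumn_addFirstColumn {s : Multiset ℕ} (hs : ∀ i ∈ s, 0 < i) (j : ℕ) :
    removeFirstColumn (addFirstColumn s j) = s := by
  have hfilter : (s.map (· + 1)).filter (1 < ·) = s.map (· + 1) :=
    Multiset.filter_eq_self.mpr fun i hi => by
      obtain ⟨x, hx, rfl⟩ := Multiset.mem_map.mp hi
      have := hs x hx
      omega
  simp [removeFirstColumn, addFirstColumn, Multiset.filter_add, hfilter, Multiset.map_map,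
    Multiset.mem_replicate]

lemma addFirstColumn_removeFirstColumn {s : Multiset ℕ} (hs : ∀ i ∈ s, 0 < i) :
    addFirstColumn (removeFirstColumn s) (s.card - (removeFirstColumn s).card) = s := by
  have hones :
      s.filter (fun i => ¬ 1 < i) = Multiset.replicate (s.filter (fun i => ¬ 1 < i)).card 1 :=
    Multiset.eq_replicate_card.mpr fun i hi => by
      have := Multiset.mem_filter.mp hi
      have := hs i this.1
      omega
  have hcard := congrArg Multiset.card (Multiset.filter_add_not (1 < ·) s)
  rw [Multiset.card_add] at hcard
  have hmap : ((s.filter (1 < ·)).map (· - 1)).map (· + 1) = s.filter (1 < ·) := by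
    rw [Multiset.map_map]
    conv_rhs => rw [← Multiset.map_id (s.filter (1 < ·))]
    exact Multiset.map_congr rfl fun i hi => by
      have := (Multiset.mem_filter.mp hi).2
      simp only [Function.comp_apply, id]
      omega
  simp only [addFirstColumn, removeFirstColumn, hmap, Multiset.card_map]
  rw [show s.card - (s.filter (1 < ·)).card = (s.filter (fun i => ¬ 1 < i)).card by omega,
    ← hones, Multiset.filter_add_not]

lemma sum_removeFirstColumn_add_card {s : Multiset ℕ} (hs : ∀ i ∈ s, 0 < i) :
    (removeFirstColumn s).sum + s.card = s.sum := by
  conv_rhs => rw [← addFirstColumn_removeFirstColumn hs]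
  rw [sum_addFirstColumn]
  have := card_removeFirstColumn_le s
  omega

namespace Nat.Partition

lemma card_parts_le {c : ℕ} (μ : Nat.Partition c) : μ.parts.card ≤ c := by
  simpa [μ.parts_sum] using
    Multiset.card_nsmul_le_sum (s := μ.parts) (a := 1) fun i hi => μ.parts_pos hi

lemma sigma_ext {x y : Σ a, Nat.Partition a} (h : x.2.parts = y.2.parts) : x = y := by
  obtain ⟨a, μ⟩ := x
  obtain ⟨b, ν⟩ := y
  obtain rfl : a = b := μ.parts_sum.symm.trans (h ▸ ν.parts_sum)
  obtain rfl : μ = ν := Nat.Partition.ext h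
  rfl

/-- `μ ↦ (c - ℓ(μ), μ without its first column)`; the condition says that the removed column,
of length `c - a`, is at least as long as the first column of what remains. -/
def firstColumnEquiv (c : ℕ) :
    Nat.Partition c ≃ {x : Σ a, Nat.Partition a // x.1 + x.2.parts.card ≤ c} where
  toFun μ := ⟨⟨c - μ.parts.card,
      { parts := removeFirstColumn μ.parts
        parts_pos := pos_of_mem_removeFirstColumn
        parts_sum := by
          have := sum_removeFirstColumn_add_card fun i hi => μ.parts_pos hi
          rw [μ.parts_sum] at this
          omega }⟩,
    by
      have := card_removeFirstColumn_le μ.parts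
      have := μ.card_parts_le
      dsimp only
      omega⟩
  invFun x :=
    { parts := addFirstColumn x.1.2.parts (c - x.1.1 - x.1.2.parts.card)
      parts_pos := pos_of_mem_addFirstColumn
      parts_sum := by
        have := x.2
        rw [sum_addFirstColumn, x.1.2.parts_sum]
        omega }
  left_inv μ := Nat.Partition.ext <| by
    have := card_removeFirstColumn_le μ.parts
    have := μ.card_parts_le
    dsimp only
    convert addFirstColumn_removeFirstColumn fun i hi => μ.parts_pos hi using 2
    omega
  right_inv x := Subtype.ext <| sigma_ext <|
    removeFirstColumn_addFirstColumn (fun i hi => x.1.2.parts_pos hi) _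

lemma firstColumnEquiv_fst {c : ℕ} (μ : Nat.Partition c) :
    (firstColumnEquiv c μ).1.1 + μ.parts.card = c := by
  have := μ.card_parts_le
  simp only [firstColumnEquiv, Equiv.coe_fn_mk]
  omega

end Nat.Partition

/-- The data `(k, λ₁, λ₂)` of the quadruples counted by `Zuniv`. -/
abbrev Shape := ℕ × (Σ a, Nat.Partition a) × (Σ a, Nat.Partition a)

def Shape.weight (x : Shape) : ℕ := 2 * x.1 + x.2.1.1 + x.2.2.1

namespace BRT

open Nat.Partition

/-- Removing the first columns of `γ₊` and `γ₋`. -/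
def shapeEquiv (m n : ℕ) :
    BRT m n ≃ {x : Shape // x.1 ≤ min m n ∧
      x.2.1.1 + x.2.1.2.parts.card ≤ m - x.1 ∧ x.2.2.1 + x.2.2.2.parts.card ≤ n - x.1} where
  toFun γ := ⟨(γ.k, firstColumnEquiv _ γ.gp, firstColumnEquiv _ γ.gm),
    γ.k_le, (firstColumnEquiv _ γ.gp).2, (firstColumnEquiv _ γ.gm).2⟩
  invFun x := ⟨x.1.1, x.2.1, (firstColumnEquiv _).symm ⟨x.1.2.1, x.2.2.1⟩,
    (firstColumnEquiv _).symm ⟨x.1.2.2, x.2.2.2⟩⟩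
  left_inv γ := by simp
  right_inv x := by simp

lemma weight_shapeEquiv_add_ht {m n : ℕ} (γ : BRT m n) :
    (shapeEquiv m n γ).1.weight + γ.ht = m + n := by
  have hk := γ.k_le
  have hp := firstColumnEquiv_fst γ.gp
  have hm := firstColumnEquiv_fst γ.gm
  simp only [shapeEquiv, Equiv.coe_fn_mk, Shape.weight, ht]
  omega

end BRT

lemma card_ht_window_eq_card_weight_window {l m n d : ℕ} (hm : 2 * l - 3 ≤ m)
    (hn : 2 * l - 3 ≤ n) (hd1 : 1 ≤ d) (hd2 : d ≤ l - 1) :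
    Nat.card {γ : BRT m (n - d) // m + n - l < γ.ht ∧ γ.ht ≤ (m + n - l) + d} =
      Nat.card {x : Shape // l - 2 * d ≤ x.weight ∧ x.weight < l - d} := by
  let window (x : Shape) : Prop := l - 2 * d ≤ x.weight ∧ x.weight < l - d
  refine Nat.card_congr <|
    ((BRT.shapeEquiv m (n - d)).subtypeEquiv (q := fun x => window x.1) fun γ => ?_).trans <|
    Equiv.subtypeSubtypeEquivSubtype (q := window) fun {x} hx => ?_
  · have := BRT.weight_shapeEquiv_add_ht γ
    omega
  · have h₁ := x.2.1.2.card_parts_le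
    have h₂ := x.2.2.2.card_parts_le
    simp only [window, Shape.weight] at hx
    omega

lemma Zuniv_eq_card_weight_lt (s : ℕ) : Zuniv s = Nat.card {x : Shape // x.weight < s} :=
  Nat.card_congr
    { toFun q := ⟨(q.1.1.2, q.1.2), by obtain ⟨_, _⟩ := q.2; simp only [Shape.weight]; omega⟩
      invFun x := ⟨((s - x.1.weight, x.1.1), x.1.2), by
        have := x.2
        simp only [Shape.weight] at this ⊢
        omega⟩
      left_inv := by
        rintro ⟨⟨⟨Δ, k⟩, x⟩, hΔ, hs⟩
        dsimp only at hΔ hs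
        simp only [Shape.weight, Subtype.mk.injEq, Prod.mk.injEq, and_true]
        omega
      right_inv x := rfl }

lemma Zuniv_zero : Zuniv 0 = 0 := by
  simp [Zuniv_eq_card_weight_lt]

lemma finite_setOf_weight_lt (s : ℕ) : {x : Shape | x.weight < s}.Finite := by
  let F : Fin s × (Σ a : Fin s, Nat.Partition a) × (Σ a : Fin s, Nat.Partition a) → Shape :=
    fun y => (y.1, ⟨y.2.1.1, y.2.1.2⟩, ⟨y.2.2.1, y.2.2.2⟩)
  refine (Set.finite_range F).subset fun x hx => ?_
  obtain ⟨k, ⟨a, μ⟩, ⟨b, ν⟩⟩ := x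
  simp only [Set.mem_ofPred_eq, Shape.weight] at hx
  exact ⟨(⟨k, by omega⟩, ⟨⟨a, by omega⟩, μ⟩, ⟨⟨b, by omega⟩, ν⟩), rfl⟩

lemma Nat.card_subtype_le_and_lt {α : Type*} (f : α → ℕ) {t s : ℕ} (hts : t ≤ s)
    (hfin : {x | f x < t}.Finite) :
    Nat.card {x // t ≤ f x ∧ f x < s} = Nat.card {x // f x < s} - Nat.card {x // f x < t} := by
  have hsub : {x | f x < t} ⊆ {x | f x < s} := fun x hx => lt_of_lt_of_le hx hts
  change Set.ncard {x | t ≤ f x ∧ f x < s} = Set.ncard {x | f x < s} - Set.ncard {x | f x < t}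
  rw [← Set.ncard_sdiff hsub hfin]
  congr 1
  ext x
  simp only [Set.mem_sdiff, Set.mem_ofPred_eq]
  omega

theorem stmt7_general (l m n d : ℕ) (hm : 2 * l - 3 ≤ m) (hn : 2 * l - 3 ≤ n)
    (hd1 : 1 ≤ d) (hd2 : d ≤ l - 1) :
    (d ≤ l / 2 →
      Nat.card {γ : BRT m (n - d) // m + n - l < γ.ht ∧ γ.ht ≤ (m + n - l) + d}
        = Zuniv (l - d) - Zuniv (l - 2 * d)) ∧
    ((l + 1) / 2 ≤ d →
      Nat.card {γ : BRT m (n - d) // m + n - l < γ.ht ∧ γ.ht ≤ (m + n - l) + d}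
        = Zuniv (l - d)) := by
  have hcount : Nat.card {γ : BRT m (n - d) // m + n - l < γ.ht ∧ γ.ht ≤ (m + n - l) + d}
      = Zuniv (l - d) - Zuniv (l - 2 * d) := by
    rw [card_ht_window_eq_card_weight_window hm hn hd1 hd2, Zuniv_eq_card_weight_lt,
      Zuniv_eq_card_weight_lt]
    exact Nat.card_subtype_le_and_lt Shape.weight (by omega) (finite_setOf_weight_lt _)
  refine ⟨fun _ => hcount, fun hd => ?_⟩
  rw [hcount, show l - 2 * d = 0 by omega, Zuniv_zero, Nat.sub_zero]

/-- For `l ≥ 2`, `m, n ≥ 2l - 3`, `N = m + n - l` and `1 ≤ d ≤ l - 1`, let `R(l,d)` be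
the number of Brauer representation triples `γ` for the pair `(m, n - d)` with
`N < ht(γ) ≤ N + d`.  Then `R(l,d) = Z_univ(l-d) - Z_univ(l-2d)` for `1 ≤ d ≤ ⌊l/2⌋`,
and `R(l,d) = Z_univ(l-d)` for `⌈l/2⌉ ≤ d ≤ l - 1`. -/
theorem stmt7 (l m n d : ℕ) (hl : 2 ≤ l) (hm : 2 * l - 3 ≤ m) (hn : 2 * l - 3 ≤ n)
    (hd1 : 1 ≤ d) (hd2 : d ≤ l - 1) :
    (d ≤ l / 2 →
      Nat.card {γ : BRT m (n - d) // m + n - l < γ.ht ∧ γ.ht ≤ (m + n - l) + d}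
        = Zuniv (l - d) - Zuniv (l - 2 * d)) ∧
    ((l + 1) / 2 ≤ d →
      Nat.card {γ : BRT m (n - d) // m + n - l < γ.ht ∧ γ.ht ≤ (m + n - l) + d}
        = Zuniv (l - d)) :=
  stmt7_general l m n d hm hn hd1 hd2
end

section
/- (The case l = 2.) Let m, n ≥ 2 and set N = m + n − 2. Then: (i) the Brauer representation triples for the pair (m,n) with ht > N are exactly the three triples (0, 1^m, 1^n), (0, [2,1^{m−2}], 1^n) and (0, 1^m, [2,1^{n−2}]); (ii) the unique N-excluded triple at depth 1 (i.e. for the pair (m, n−1)) is (0, 1^m, 1^{n−1}); (iii) the unique Brauer representation triple for (m,n) with ht ≤ N which possesses an N-excluded ancestor is (1, 1^{m−1}, 1^{n−1}). -/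
namespace Multiset

variable {s : Multiset ℕ}

theorem card_le_sum_of_pos (h : ∀ x ∈ s, 0 < x) : card s ≤ s.sum := by
  simpa using card_nsmul_le_sum h

theorem eq_replicate_one_of_sum_le_card (h : ∀ x ∈ s, 0 < x) (hs : s.sum ≤ card s) :
    s = replicate (card s) 1 := by
  refine eq_replicate_card.2 fun x hx => ?_
  have hrest := card_le_sum_of_pos (s := s.erase x) fun y hy => h y (mem_of_mem_erase hy)
  have hsum := sum_erase hx
  have hcard := card_erase_add_one hx
  have := h x hx
  omega

theorem eq_two_cons_of_sum_eq_card_add_one (h : ∀ x ∈ s, 0 < x) (hs : s.sum = card s + 1) :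
    s = 2 ::ₘ replicate (card s - 1) 1 := by
  induction s using Multiset.induction with
  | empty => simp at hs
  | cons a t ih =>
    have ht : ∀ x ∈ t, 0 < x := fun x hx => h x (mem_cons_of_mem hx)
    have ha := h a (mem_cons_self a t)
    have := card_le_sum_of_pos ht
    simp only [card_cons, sum_cons, Nat.add_sub_cancel] at hs ⊢
    obtain rfl | rfl : a = 1 ∨ a = 2 := by omega
    · have hcard : card t = card t - 1 + 1 := by
        have : t ≠ 0 := by rintro rfl; simp at hs
        have := card_pos.2 this
        omega
      conv_lhs => rw [ih ht (by omega), cons_swap]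
      rw [hcard, replicate_succ, Nat.add_sub_cancel]
    · exact congrArg (2 ::ₘ ·) (eq_replicate_one_of_sum_le_card ht (by omega))

end Multiset

namespace Nat.Partition

variable {a : ℕ}

def ones (a : ℕ) : a.Partition where
  parts := Multiset.replicate a 1
  parts_pos hi := by rw [Multiset.eq_of_mem_replicate hi]; exact Nat.one_pos
  parts_sum := by simp

theorem card_parts_le_s17 (P : a.Partition) : Multiset.card P.parts ≤ a :=
  (Multiset.card_le_sum_of_pos fun _ => P.parts_pos).trans_eq P.parts_sum

theorem card_parts_eq_iff (P : a.Partition) :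
    Multiset.card P.parts = a ↔ P.parts = Multiset.replicate a 1 := by
  constructor
  · intro h
    have := Multiset.eq_replicate_one_of_sum_le_card (fun _ => P.parts_pos)
      (by rw [P.parts_sum, h])
    rwa [h] at this
  · intro h
    rw [h, Multiset.card_replicate]

theorem card_parts_add_one_eq_iff (P : a.Partition) :
    Multiset.card P.parts + 1 = a ↔ P.parts = 2 ::ₘ Multiset.replicate (a - 2) 1 := by
  constructor
  · intro h
    have := Multiset.eq_two_cons_of_sum_eq_card_add_one (fun _ => P.parts_pos)
      (by rw [P.parts_sum, h])
    rwa [show Multiset.card P.parts - 1 = a - 2 by omega] at this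
  · intro h
    have hsum := P.parts_sum
    simp only [h, Multiset.sum_cons, Multiset.sum_replicate, smul_eq_mul, mul_one] at hsum
    simp only [h, Multiset.card_cons, Multiset.card_replicate]
    omega

end Nat.Partition

theorem AddBox.card_le {lam mu : Multiset ℕ} (h : AddBox lam mu) :
    Multiset.card lam ≤ Multiset.card mu := by
  rcases h with rfl | ⟨a, ha, rfl⟩
  · simp
  · simp [Multiset.card_erase_add_one ha]

theorem AddBox.card_le_add_one {lam mu : Multiset ℕ} (h : AddBox lam mu) :
    Multiset.card mu ≤ Multiset.card lam + 1 := by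
  rcases h with rfl | ⟨a, ha, rfl⟩
  · simp
  · simp [Multiset.card_erase_add_one ha]

namespace BRT

variable {m n : ℕ}

theorem ht_add_two_mul_k_le (γ : BRT m n) : γ.ht + 2 * γ.k ≤ m + n := by
  have := γ.gp.card_parts_le_s17
  have := γ.gm.card_parts_le_s17
  have := γ.k_le
  dsimp only [ht]
  omega

theorem ht_add_two_mul_k_eq_iff (γ : BRT m n) :
    γ.ht + 2 * γ.k = m + n ↔
      γ.gp.parts = Multiset.replicate (m - γ.k) 1 ∧
        γ.gm.parts = Multiset.replicate (n - γ.k) 1 := by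
  rw [← γ.gp.card_parts_eq_iff, ← γ.gm.card_parts_eq_iff]
  have := γ.gp.card_parts_le_s17
  have := γ.gm.card_parts_le_s17
  have := γ.k_le
  dsimp only [ht]
  omega

theorem add_le_ht_iff (γ : BRT m n) :
    m + n ≤ γ.ht ↔
      γ.k = 0 ∧ γ.gp.parts = Multiset.replicate m 1 ∧ γ.gm.parts = Multiset.replicate n 1 := by
  obtain ⟨k, hk, gp, gm⟩ := γ
  have hp := gp.card_parts_le_s17
  have hq := gm.card_parts_le_s17
  dsimp only [ht]
  constructor
  · intro h
    obtain rfl : k = 0 := by omega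
    exact ⟨rfl, gp.card_parts_eq_iff.1 (by omega), gm.card_parts_eq_iff.1 (by omega)⟩
  · rintro ⟨rfl, h₁, h₂⟩
    have := gp.card_parts_eq_iff.2 h₁
    have := gm.card_parts_eq_iff.2 h₂
    omega

theorem add_le_ht_add_one_iff (γ : BRT m n) :
    m + n ≤ γ.ht + 1 ↔
      γ.k = 0 ∧
        ((γ.gp.parts = Multiset.replicate m 1 ∧ γ.gm.parts = Multiset.replicate n 1) ∨
          (γ.gp.parts = 2 ::ₘ Multiset.replicate (m - 2) 1 ∧
            γ.gm.parts = Multiset.replicate n 1) ∨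
          (γ.gp.parts = Multiset.replicate m 1 ∧
            γ.gm.parts = 2 ::ₘ Multiset.replicate (n - 2) 1)) := by
  obtain ⟨k, hk, gp, gm⟩ := γ
  have hp := gp.card_parts_le_s17
  have hq := gm.card_parts_le_s17
  dsimp only [ht]
  constructor
  · intro h
    obtain rfl : k = 0 := by omega
    refine ⟨rfl, ?_⟩
    obtain ⟨h₁, h₂⟩ | ⟨h₁, h₂⟩ | ⟨h₁, h₂⟩ :
        (Multiset.card gp.parts = m ∧ Multiset.card gm.parts = n) ∨
          (Multiset.card gp.parts + 1 = m ∧ Multiset.card gm.parts = n) ∨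
          (Multiset.card gp.parts = m ∧ Multiset.card gm.parts + 1 = n) := by omega
    · exact .inl ⟨gp.card_parts_eq_iff.1 h₁, gm.card_parts_eq_iff.1 h₂⟩
    · exact .inr (.inl ⟨gp.card_parts_add_one_eq_iff.1 h₁, gm.card_parts_eq_iff.1 h₂⟩)
    · exact .inr (.inr ⟨gp.card_parts_eq_iff.1 h₁, gm.card_parts_add_one_eq_iff.1 h₂⟩)
  · rintro ⟨rfl, ⟨h₁, h₂⟩ | ⟨h₁, h₂⟩ | ⟨h₁, h₂⟩⟩
    · have := gp.card_parts_eq_iff.2 h₁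
      have := gm.card_parts_eq_iff.2 h₂
      omega
    · have := gp.card_parts_add_one_eq_iff.2 h₁
      have := gm.card_parts_eq_iff.2 h₂
      omega
    · have := gp.card_parts_eq_iff.2 h₁
      have := gm.card_parts_add_one_eq_iff.2 h₂
      omega

end BRT

namespace IsAncestor

variable {m n : ℕ}

theorem lt_depth {d d' : ℕ} {γ : BRT m (n - d)} {γ' : BRT m (n - d')}
    (h : IsAncestor m n d d' γ γ') : d < d' := by
  induction h with
  | step => omega
  | tail => omega

theorem isParent_of_depth_succ {d : ℕ} {γ : BRT m (n - d)} {γ' : BRT m (n - (d + 1))}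
    (h : IsAncestor m n d (d + 1) γ γ') : IsParent γ γ' := by
  cases h with
  | step _ _ hp => exact hp
  | tail _ h' _ => exact absurd h'.lt_depth (lt_irrefl _)

theorem eq_ones_of_ht_le_of_lt_ht {d' : ℕ} {γ : BRT m (n - 0)} {γ' : BRT m (n - d')}
    (hn : 2 ≤ n) (h : IsAncestor m n 0 d' γ γ') (hγ : γ.ht ≤ m + n - 2)
    (hγ' : m + n - 2 < γ'.ht) :
    γ.k = 1 ∧ γ.gp.parts = Multiset.replicate (m - 1) 1 ∧
      γ.gm.parts = Multiset.replicate (n - 1) 1 := by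
  have hd := h.lt_depth
  have hbound := γ'.ht_add_two_mul_k_le
  obtain rfl : d' = 1 := by omega
  rcases h.isParent_of_depth_succ with ⟨hk, hp, hq⟩ | ⟨hk, hq, hp⟩
  · have := hq.card_le
    have : γ'.ht ≤ γ.ht := by dsimp only [BRT.ht]; rw [hp]; omega
    omega
  · have hk1 : γ.k = 1 := by
      have hsum := γ.gm.parts_sum
      rw [← hq, γ'.gm.parts_sum] at hsum
      omega
    have := hp.card_le_add_one
    have : γ'.ht ≤ γ.ht + 1 := by dsimp only [BRT.ht]; rw [hq]; omega
    have := γ.ht_add_two_mul_k_le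
    obtain ⟨hp1, hq1⟩ := γ.ht_add_two_mul_k_eq_iff.1 (by omega)
    exact ⟨hk1, hp1.trans (by simp [hk1]), hq1.trans (by simp [hk1])⟩

end IsAncestor

theorem BRT.exists_excluded_ancestor_iff {m n : ℕ} (hn : 2 ≤ n) (γ : BRT m (n - 0)) :
    (γ.ht ≤ m + n - 2 ∧
      ∃ d' : ℕ, ∃ γ' : BRT m (n - d'), IsAncestor m n 0 d' γ γ' ∧ m + n - 2 < γ'.ht) ↔
      γ.k = 1 ∧ γ.gp.parts = Multiset.replicate (m - 1) 1 ∧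
        γ.gm.parts = Multiset.replicate (n - 1) 1 := by
  constructor
  · rintro ⟨hγ, d', γ', h, hγ'⟩
    exact h.eq_ones_of_ht_le_of_lt_ht hn hγ hγ'
  · rintro ⟨hk, hp, hq⟩
    have hm : 1 ≤ m := by have := γ.k_le; omega
    let γ' : BRT m (n - 1) := ⟨0, Nat.zero_le _, .ones m, .ones (n - 1)⟩
    have hadd : AddBox γ.gp.parts γ'.gp.parts :=
      .inl (by rw [hp, ← Multiset.replicate_succ, Nat.sub_add_cancel hm]; rfl)
    have hparent : IsParent γ γ' := .inr ⟨by rw [hk], hq.symm, hadd⟩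
    refine ⟨?_, 1, γ', .step γ γ' hparent, ?_⟩
    · simp only [BRT.ht, Nat.sub_zero, hp, hq, Multiset.card_replicate]
      omega
    · simp only [BRT.ht, γ', Nat.Partition.ones, Nat.sub_zero, Multiset.card_replicate]
      omega

theorem stmt17_general (m n : ℕ) (hn : 2 ≤ n) :
    (∀ γ : BRT m (n - 0),
      m + n - 2 < γ.ht ↔
        (γ.k = 0 ∧
          ((γ.gp.parts = Multiset.replicate m 1 ∧
              γ.gm.parts = Multiset.replicate n 1) ∨
           (γ.gp.parts = 2 ::ₘ Multiset.replicate (m - 2) 1 ∧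
              γ.gm.parts = Multiset.replicate n 1) ∨
           (γ.gp.parts = Multiset.replicate m 1 ∧
              γ.gm.parts = 2 ::ₘ Multiset.replicate (n - 2) 1)))) ∧
    (∀ γ : BRT m (n - 1),
      m + n - 2 < γ.ht ↔
        (γ.k = 0 ∧ γ.gp.parts = Multiset.replicate m 1 ∧
          γ.gm.parts = Multiset.replicate (n - 1) 1)) ∧
    (∀ γ : BRT m (n - 0),
      (γ.ht ≤ m + n - 2 ∧
        ∃ d' : ℕ, ∃ γ' : BRT m (n - d'),
          IsAncestor m n 0 d' γ γ' ∧ m + n - 2 < γ'.ht) ↔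
        (γ.k = 1 ∧ γ.gp.parts = Multiset.replicate (m - 1) 1 ∧
          γ.gm.parts = Multiset.replicate (n - 1) 1)) := by
  refine ⟨fun γ => ?_, fun γ => ?_, BRT.exists_excluded_ancestor_iff hn⟩
  · exact (by omega : m + n - 2 < γ.ht ↔ m + n ≤ γ.ht + 1).trans γ.add_le_ht_add_one_iff
  · exact (by omega : m + n - 2 < γ.ht ↔ m + (n - 1) ≤ γ.ht).trans γ.add_le_ht_iff

/-- The case `l = 2`: for `m, n ≥ 2` and `N = m + n - 2`:
(i) the triples for `(m,n)` with `ht > N` are exactly `(0, 1^m, 1^n)`,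
`(0, [2,1^{m-2}], 1^n)` and `(0, 1^m, [2,1^{n-2}])`;
(ii) the unique `N`-excluded triple at depth `1` is `(0, 1^m, 1^{n-1})`;
(iii) the unique triple for `(m,n)` with `ht ≤ N` possessing an `N`-excluded ancestor is
`(1, 1^{m-1}, 1^{n-1})`. -/
theorem stmt17 (m n : ℕ) (hm : 2 ≤ m) (hn : 2 ≤ n) :
    (∀ γ : BRT m (n - 0),
      m + n - 2 < γ.ht ↔
        (γ.k = 0 ∧
          ((γ.gp.parts = Multiset.replicate m 1 ∧
              γ.gm.parts = Multiset.replicate n 1) ∨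
           (γ.gp.parts = 2 ::ₘ Multiset.replicate (m - 2) 1 ∧
              γ.gm.parts = Multiset.replicate n 1) ∨
           (γ.gp.parts = Multiset.replicate m 1 ∧
              γ.gm.parts = 2 ::ₘ Multiset.replicate (n - 2) 1)))) ∧
    (∀ γ : BRT m (n - 1),
      m + n - 2 < γ.ht ↔
        (γ.k = 0 ∧ γ.gp.parts = Multiset.replicate m 1 ∧
          γ.gm.parts = Multiset.replicate (n - 1) 1)) ∧
    (∀ γ : BRT m (n - 0),
      (γ.ht ≤ m + n - 2 ∧
        ∃ d' : ℕ, ∃ γ' : BRT m (n - d'),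
          IsAncestor m n 0 d' γ γ' ∧ m + n - 2 < γ'.ht) ↔
        (γ.k = 1 ∧ γ.gp.parts = Multiset.replicate (m - 1) 1 ∧
          γ.gm.parts = Multiset.replicate (n - 1) 1)) :=
  stmt17_general m n hn
end
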